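/- For every 0 ≤ q ≤ n and all π, τ ∈ W_n with π ≤_e p_{n,q} and τ ≤_e p_{n,q}, the product π·σ_{n,q}·τ^{−1} is reduced, i.e. ℓ(π·σ_{n,q}·τ^{−1}) = ℓ(π) + ℓ(σ_{n,q}) + ℓ(τ). -/

import Mathlib

/-!
The length of a signed permutation `w` is its number of inversions: pairs `(a, b)` with
`0 < b ≤ n`, `-b ≤ a < b`, `a ≠ 0` (the positive roots `e_b - e_a`) such that `w b < w a`.
Counting pair by pair gives `inv(u w) + 2 c = inv(u) + inv(w)`, where `c` counts the inversions
of `w` that `w` carries to inversions of `u`; so `u w` is reduced iff `c = 0`, and then every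
inversion of `w` is one of `u w`. Hence the inversions of `π` and `τ` are among those of
`p_{n,q}`, the pairs with `1 ≤ a ≤ q < b`. The explicit formula for `σ_{n,q}` shows that it
inverts none of these pairs and carries them, as well as its own inversions, to pairs outside
this set. This excludes common inversions in `π σ_{n,q}`, and then in `(π σ_{n,q}) τ⁻¹`, since
`τ⁻¹` carries its inversions to inversions of `τ`.
-/

namespace BnPaper

/-- The generator `t`: swaps `1` and `-1`, fixing all other points. -/
def t : Equiv.Perm ℤ := Equiv.swap 1 (-1)

/-- The generator `s i`: swaps `i ↔ i+1` and `-i ↔ -(i+1)`. -/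
def s (i : ℤ) : Equiv.Perm ℤ := Equiv.swap i (i + 1) * Equiv.swap (-i) (-(i + 1))

/-- The descending product `s_j · s_{j-1} ⋯ s_i` (the identity when `i > j`). -/
def desc (i j : ℕ) : Equiv.Perm ℤ :=
  ((List.range (j + 1 - i)).map (fun k => s ((j : ℤ) - (k : ℤ)))).prod

/-- The ascending product `s_i · s_{i+1} ⋯ s_j` (the identity when `i > j`). -/
def asc (i j : ℕ) : Equiv.Perm ℤ :=
  ((List.range (j + 1 - i)).map (fun k => s ((i : ℤ) + (k : ℤ)))).prod

/-- `t_j = s_{j-1} ⋯ s_1 · t · s_1 ⋯ s_{j-1}`. -/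
def tt (j : ℕ) : Equiv.Perm ℤ := desc 1 (j - 1) * t * (desc 1 (j - 1))⁻¹

/-- The Coxeter generating set `{t, s_1, …, s_{n-1}}` of `W_n`. -/
def gens (n : ℕ) : Set (Equiv.Perm ℤ) :=
  insert t {g | ∃ i : ℕ, 1 ≤ i ∧ i ≤ n - 1 ∧ g = s (i : ℤ)}

/-- The Coxeter length: the least number of generators whose product is `w`. -/
noncomputable def len (n : ℕ) (w : Equiv.Perm ℤ) : ℕ :=
  sInf {k | ∃ l : List (Equiv.Perm ℤ), l.length = k ∧ (∀ g ∈ l, g ∈ gens n) ∧ l.prod = w}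

/-- `W_n` realised as the signed permutations of `{-n, …, -1, 1, …, n}`:
permutations of `ℤ` that are odd (`w(-i) = -w(i)`) and fix everything beyond `n` in
absolute value. -/
def W (n : ℕ) : Set (Equiv.Perm ℤ) :=
  {w | (∀ i : ℤ, w (-i) = -(w i)) ∧ ∀ i : ℤ, (n : ℤ) < |i| → w i = i}

/-- The right descent set `Des(w)`. -/
def Des (n : ℕ) (w : Equiv.Perm ℤ) : Set (Equiv.Perm ℤ) :=
  {g | g ∈ gens n ∧ len n (w * g) < len n w}

/-- The enhanced descent-set invariant
`ρ_m(w) = Des(w) ∪ {t_j : 2 ≤ j ≤ m, ℓ(w t_j) < ℓ(w)}`. -/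
def rho (n m : ℕ) (w : Equiv.Perm ℤ) : Set (Equiv.Perm ℤ) :=
  Des n w ∪ {g | ∃ j : ℕ, 2 ≤ j ∧ j ≤ m ∧ g = tt j ∧ len n (w * tt j) < len n w}

/-- `Área_n`: the negative entries of the row form appear in increasing order and
the positive entries in strictly decreasing order. -/
def Area (n : ℕ) : Set (Equiv.Perm ℤ) :=
  {w | w ∈ W n ∧ ∀ i j : ℤ, 1 ≤ i → i < j → j ≤ (n : ℤ) →
    (w i < 0 → w j < 0 → w i < w j) ∧ (0 < w i → 0 < w j → w j < w i)}

/-- The suffix relation `y ≤_e w`: `w = z · y` with `ℓ(w) = ℓ(z) + ℓ(y)`. -/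
def Suf (n : ℕ) (y w : Equiv.Perm ℤ) : Prop :=
  ∃ z, z ∈ W n ∧ w = z * y ∧ len n w = len n z + len n y

/-- `a_q = (t)(s_1 t)(s_2 s_1 t) ⋯ (s_{q-1} ⋯ s_1 t)`. -/
def aw (q : ℕ) : Equiv.Perm ℤ := ((List.range q).map (fun k => desc 1 k * t)).prod

/-- `b_q = (s_{q+1})(s_{q+2} s_{q+1}) ⋯ (s_{n-1} ⋯ s_{q+1})` (identity for `q ≥ n-1`). -/
def bw (n q : ℕ) : Equiv.Perm ℤ :=
  ((List.range (n - 1 - q)).map (fun k => desc (q + 1) (q + 1 + k))).prod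

/-- `σ_{n,q} = a_q · b_q`. -/
def sig (n q : ℕ) : Equiv.Perm ℤ := aw q * bw n q

/-- `p_{n,q} = (s_{n-q} ⋯ s_1)(s_{n-q+1} ⋯ s_2) ⋯ (s_{n-1} ⋯ s_q)`,
with `p_{n,0} = p_{n,n} = e`. -/
def p (n q : ℕ) : Equiv.Perm ℤ :=
  ((List.range q).map (fun m => desc (1 + m) (n - q + m))).prod

/-- `Π_{n,q} = (s_{n-q-1} ⋯ s_1) · t · p_{n,q}`. -/
def PiElt (n q : ℕ) : Equiv.Perm ℤ := desc 1 (n - q - 1) * t * p n q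

/-- `Υ(w) = {z ∈ Área_n : Des(z) = Des(w)}`. -/
def Ups (n : ℕ) (w : Equiv.Perm ℤ) : Set (Equiv.Perm ℤ) :=
  {z | z ∈ Area n ∧ Des n z = Des n w}

/-- The parabolic subgroup `W_J = ⟨s_1, …, s_{n-1}⟩`. -/
def WJ (n : ℕ) : Set (Equiv.Perm ℤ) :=
  ↑(Subgroup.closure {g | ∃ i : ℕ, 1 ≤ i ∧ i ≤ n - 1 ∧ g = s (i : ℤ)})

/-- The parabolic subgroup `W_K = ⟨t, s_1, …, s_{n-2}⟩`. -/
def WK (n : ℕ) : Set (Equiv.Perm ℤ) :=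
  ↑(Subgroup.closure (insert t {g | ∃ i : ℕ, 1 ≤ i ∧ i ≤ n - 2 ∧ g = s (i : ℤ)}))

/-- Knuth relation of type `I_k` : `w' = w · s_{i+1}` when
`w(i+1) < w(i) < w(i+2)` or `w(i+2) < w(i) < w(i+1)`. -/
def stepI (k : ℕ) (w w' : Equiv.Perm ℤ) : Prop :=
  ∃ i : ℤ, 1 ≤ i ∧ i ≤ (k : ℤ) - 2 ∧
    ((w (i + 1) < w i ∧ w i < w (i + 2)) ∨ (w (i + 2) < w i ∧ w i < w (i + 1))) ∧
    w' = w * s (i + 1)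

/-- Knuth relation of type `II_k` : `w' = w · s_i` when
`w(i+1) < w(i+2) < w(i)` or `w(i) < w(i+2) < w(i+1)`. -/
def stepII (k : ℕ) (w w' : Equiv.Perm ℤ) : Prop :=
  ∃ i : ℤ, 1 ≤ i ∧ i ≤ (k : ℤ) - 2 ∧
    ((w (i + 1) < w (i + 2) ∧ w (i + 2) < w i) ∨ (w i < w (i + 2) ∧ w (i + 2) < w (i + 1))) ∧
    w' = w * s i

/-- Knuth relation of type `III_k` : `w' = w · s_i` when `w(i)` and `w(i+1)` have
opposite signs. -/
def stepIII (k : ℕ) (w w' : Equiv.Perm ℤ) : Prop :=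
  ∃ i : ℤ, 1 ≤ i ∧ i ≤ (k : ℤ) - 1 ∧
    ((w i < 0 ∧ 0 < w (i + 1)) ∨ (w (i + 1) < 0 ∧ 0 < w i)) ∧
    w' = w * s i

open Equiv

section SignedPerm

variable {n : ℕ} {u w : Perm ℤ}

theorem t_apply (x : ℤ) : t x = if x = 1 then -1 else if x = -1 then 1 else x := by
  simp only [t, swap_apply_def]

theorem s_apply {i : ℤ} (hi : 1 ≤ i) (x : ℤ) :
    s i x = if x = i then i + 1 else if x = i + 1 then i
      else if x = -i then -(i + 1) else if x = -(i + 1) then -i else x := by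
  simp only [s, Perm.mul_apply, swap_apply_def]
  split_ifs <;> omega

theorem mem_W_of_odd (hodd : ∀ x, w (-x) = -w x) (hfix : ∀ x, (n : ℤ) < x → w x = x) :
    w ∈ W n := by
  refine ⟨hodd, fun x hx => ?_⟩
  rcases le_or_gt 0 x with h | h
  · exact hfix x (by rwa [abs_of_nonneg h] at hx)
  · rw [← neg_neg x, hodd, hfix (-x) (by rwa [abs_of_neg h] at hx)]

theorem one_mem_W (n : ℕ) : (1 : Perm ℤ) ∈ W n :=
  ⟨fun _ => rfl, fun _ _ => rfl⟩

theorem mul_mem_W (hu : u ∈ W n) (hw : w ∈ W n) : u * w ∈ W n :=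
  ⟨fun x => by simp only [Perm.mul_apply, hw.1, hu.1],
    fun x hx => by simp only [Perm.mul_apply, hw.2 x hx, hu.2 x hx]⟩

theorem inv_mem_W (hw : w ∈ W n) : w⁻¹ ∈ W n :=
  ⟨fun x => w.injective (by simp only [Perm.coe_inv, apply_symm_apply, hw.1]),
    fun x hx => w.injective (by simp only [Perm.coe_inv, apply_symm_apply, hw.2 x hx])⟩

theorem apply_mem_Icc_of_mem_W (hw : w ∈ W n) {x : ℤ} (hx : x ∈ Set.Icc (-(n : ℤ)) n) :
    w x ∈ Set.Icc (-(n : ℤ)) n := by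
  by_contra h
  have hwx : (n : ℤ) < |w x| := by
    rw [Set.mem_Icc] at hx h
    rcases abs_cases (w x) with ⟨_, _⟩ | ⟨_, _⟩ <;> omega
  have := w.injective (hw.2 _ hwx)
  rw [Set.mem_Icc] at hx
  rcases abs_cases (w x) with ⟨_, _⟩ | ⟨_, _⟩ <;> omega

theorem apply_ne_zero_of_mem_W (hw : w ∈ W n) {x : ℤ} (hx : x ≠ 0) : w x ≠ 0 := by
  intro h
  have := w.injective (show w (-x) = w x by rw [hw.1, h, neg_zero])
  omega

theorem t_mem_W (hn : 1 ≤ n) : t ∈ W n :=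
  mem_W_of_odd (fun x => by simp only [t_apply]; split_ifs <;> omega)
    fun x hx => by rw [t_apply]; split_ifs <;> omega

theorem s_mem_W {i : ℤ} (h1 : 1 ≤ i) (h2 : i + 1 ≤ n) : s i ∈ W n :=
  mem_W_of_odd (fun x => by simp only [s_apply h1]; split_ifs <;> omega)
    fun x hx => by rw [s_apply h1]; split_ifs <;> omega

theorem gens_subset_W (hn : 1 ≤ n) : gens n ⊆ W n := by
  rintro g (rfl | ⟨i, hi1, hi2, rfl⟩)
  · exact t_mem_W hn
  · exact s_mem_W (by exact_mod_cast hi1) (by omega)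

theorem list_prod_mem_W (hn : 1 ≤ n) {l : List (Perm ℤ)} (hl : ∀ g ∈ l, g ∈ gens n) :
    l.prod ∈ W n := by
  induction l with
  | nil => exact one_mem_W n
  | cons g l ih =>
    rw [List.forall_mem_cons] at hl
    exact mul_mem_W (gens_subset_W hn hl.1) (ih hl.2)

theorem mem_W_of_suf {y : Perm ℤ} (hy : Suf n y w) (hw : w ∈ W n) : y ∈ W n := by
  obtain ⟨z, hz, rfl, -⟩ := hy
  simpa using mul_mem_W (inv_mem_W hz) hw

end SignedPerm

section Inversions

open Finset

variable {n : ℕ} {u w : Perm ℤ} {pr : ℤ × ℤ}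

/-- `(a, b)` encodes the positive root `e_b - e_a` of `B_n` (with `e_{-k} = -e_k`); a signed
permutation `w` makes it negative iff `w b < w a`. -/
noncomputable def rootPairs (n : ℕ) : Finset (ℤ × ℤ) :=
  {pr ∈ Icc (-(n : ℤ)) n ×ˢ Icc 1 (n : ℤ) | pr.1 ≠ 0 ∧ -pr.2 ≤ pr.1 ∧ pr.1 < pr.2}

/-- The representative in `rootPairs` of `{(a, b), (-b, -a), (b, a), (-a, -b)}`, the pairs of
`±(e_b - e_a)`; thus `pairMap w` is the action of `w` on positive roots up to sign. -/
def pairRep (pr : ℤ × ℤ) : ℤ × ℤ :=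
  if 0 < pr.1 + pr.2 then (if pr.1 < pr.2 then pr else (pr.2, pr.1))
  else if pr.1 + pr.2 < 0 then (if pr.1 < pr.2 then (-pr.2, -pr.1) else (-pr.1, -pr.2))
  else (if 0 < pr.2 then pr else (pr.2, pr.1))

def pairMap (w : Perm ℤ) (pr : ℤ × ℤ) : ℤ × ℤ := pairRep (w pr.1, w pr.2)

noncomputable def ninv (n : ℕ) (w : Perm ℤ) : ℕ := #{pr ∈ rootPairs n | w pr.2 < w pr.1}

theorem mem_rootPairs :
    pr ∈ rootPairs n ↔ pr.1 ≠ 0 ∧ 1 ≤ pr.2 ∧ pr.2 ≤ n ∧ -pr.2 ≤ pr.1 ∧ pr.1 < pr.2 := by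
  simp only [rootPairs, mem_filter, mem_product, mem_Icc]
  omega

theorem pairRep_mem {a b : ℤ} (ha : a ≠ 0) (hb : b ≠ 0) (hab : a ≠ b)
    (ha' : a ∈ Set.Icc (-(n : ℤ)) n) (hb' : b ∈ Set.Icc (-(n : ℤ)) n) :
    pairRep (a, b) ∈ rootPairs n := by
  rw [Set.mem_Icc] at ha' hb'
  unfold pairRep
  split_ifs <;> rw [mem_rootPairs] <;> dsimp only <;> omega

theorem pairRep_of_mem (h : pr ∈ rootPairs n) : pairRep pr = pr := by
  rw [mem_rootPairs] at h
  unfold pairRep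
  split_ifs <;> first | rfl | omega

theorem pairRep_swap (a b : ℤ) : pairRep (b, a) = pairRep (a, b) := by
  unfold pairRep
  split_ifs <;> simp only [Prod.mk.injEq] <;> omega

theorem pairRep_neg (a b : ℤ) : pairRep (-a, -b) = pairRep (a, b) := by
  unfold pairRep
  split_ifs <;> simp only [Prod.mk.injEq] <;> omega

theorem pairRep_cases (a b : ℤ) :
    pairRep (a, b) = (a, b) ∨ pairRep (a, b) = (b, a) ∨ pairRep (a, b) = (-b, -a) ∨
      pairRep (a, b) = (-a, -b) := by
  unfold pairRep
  split_ifs <;> simp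

theorem pairMap_mem (hw : w ∈ W n) (hpr : pr ∈ rootPairs n) : pairMap w pr ∈ rootPairs n := by
  obtain ⟨h1, h2, h3, h4, h5⟩ := mem_rootPairs.1 hpr
  exact pairRep_mem (apply_ne_zero_of_mem_W hw h1) (apply_ne_zero_of_mem_W hw (by omega))
    (w.injective.ne (by omega)) (apply_mem_Icc_of_mem_W hw ⟨by omega, by omega⟩)
    (apply_mem_Icc_of_mem_W hw ⟨by omega, by omega⟩)

theorem pairMap_inv_pairMap (hw : w ∈ W n) (hpr : pr ∈ rootPairs n) :
    pairMap w⁻¹ (pairMap w pr) = pr := by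
  have hodd : ∀ x, w.symm (-x) = -w.symm x := (inv_mem_W hw).1
  unfold pairMap
  rcases pairRep_cases (w pr.1) (w pr.2) with h | h | h | h <;>
    simp only [h, Perm.coe_inv, hodd, symm_apply_apply, pairRep_swap, pairRep_neg, Prod.mk.eta,
      pairRep_of_mem hpr]

theorem sum_comp_pairMap (hw : w ∈ W n) (f : ℤ × ℤ → ℕ) :
    ∑ pr ∈ rootPairs n, f (pairMap w pr) = ∑ pr ∈ rootPairs n, f pr :=
  sum_nbij' (pairMap w) (pairMap w⁻¹) (fun _ => pairMap_mem hw)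
    (fun _ => pairMap_mem (inv_mem_W hw)) (fun _ => pairMap_inv_pairMap hw)
    (fun pr hpr => by simpa using pairMap_inv_pairMap (inv_mem_W hw) hpr) fun _ _ => rfl

theorem mul_inverts_iff (hu : u ∈ W n) (hpr : pr ∈ rootPairs n) :
    (u * w) pr.2 < (u * w) pr.1 ↔
      ¬(u (pairMap w pr).2 < u (pairMap w pr).1 ↔ w pr.2 < w pr.1) := by
  rw [mem_rootPairs] at hpr
  have hne : w pr.1 ≠ w pr.2 := w.injective.ne (by omega)
  have hne' : u (w pr.1) ≠ u (w pr.2) := u.injective.ne hne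
  simp only [Perm.mul_apply, pairMap, pairRep]
  split_ifs <;> dsimp only <;> (try simp only [hu.1]) <;> omega

theorem ninv_mul_add_two_mul (hu : u ∈ W n) (hw : w ∈ W n) :
    ninv n (u * w) +
        2 * #{pr ∈ rootPairs n | w pr.2 < w pr.1 ∧ u (pairMap w pr).2 < u (pairMap w pr).1} =
      ninv n u + ninv n w := by
  unfold ninv
  rw [card_filter, card_filter, card_filter, card_filter,
    ← sum_comp_pairMap hw fun pr => if u pr.2 < u pr.1 then 1 else 0, mul_sum,
    ← sum_add_distrib, ← sum_add_distrib]
  refine sum_congr rfl fun pr hpr => ?_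
  have h := mul_inverts_iff (w := w) hu hpr
  split_ifs <;> first | rfl | (exfalso; tauto)

theorem ninv_mul_le (hu : u ∈ W n) (hw : w ∈ W n) : ninv n (u * w) ≤ ninv n u + ninv n w := by
  have := ninv_mul_add_two_mul hu hw
  omega

theorem ninv_mul_eq_add_iff (hu : u ∈ W n) (hw : w ∈ W n) :
    ninv n (u * w) = ninv n u + ninv n w ↔
      ∀ pr ∈ rootPairs n, w pr.2 < w pr.1 → ¬u (pairMap w pr).2 < u (pairMap w pr).1 := by
  have h := ninv_mul_add_two_mul hu hw
  have h0 := card_eq_zero (s := {pr ∈ rootPairs n |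
    w pr.2 < w pr.1 ∧ u (pairMap w pr).2 < u (pairMap w pr).1})
  simp only [filter_eq_empty_iff, not_and] at h0
  rw [← h0]
  omega

theorem inverts_of_ninv_mul_eq_add (hu : u ∈ W n) (hw : w ∈ W n)
    (h : ninv n (u * w) = ninv n u + ninv n w) (hpr : pr ∈ rootPairs n)
    (hwpr : w pr.2 < w pr.1) : (u * w) pr.2 < (u * w) pr.1 := by
  have := (ninv_mul_eq_add_iff hu hw).1 h pr hpr hwpr
  rw [mul_inverts_iff (w := w) hu hpr]
  tauto

theorem inv_inverts_iff (hw : w ∈ W n) (hpr : pr ∈ rootPairs n) :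
    w⁻¹ pr.2 < w⁻¹ pr.1 ↔ w (pairMap w⁻¹ pr).2 < w (pairMap w⁻¹ pr).1 := by
  have h := mul_inverts_iff (w := w⁻¹) hw hpr
  rw [mul_inv_cancel, Perm.one_apply, Perm.one_apply] at h
  have : ¬pr.2 < pr.1 := by rw [mem_rootPairs] at hpr; omega
  tauto

theorem ninv_inv (hw : w ∈ W n) : ninv n w⁻¹ = ninv n w := by
  unfold ninv
  rw [card_filter, card_filter,
    ← sum_comp_pairMap (inv_mem_W hw) fun pr => if w pr.2 < w pr.1 then 1 else 0]
  exact sum_congr rfl fun pr hpr => if_congr (inv_inverts_iff hw hpr) rfl rfl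

end Inversions

section Length

open Finset

theorem card_filter_eq_one_of_iff {α : Type*} [DecidableEq α] {s : Finset α} {P : α → Prop}
    [DecidablePred P] {a : α} (ha : a ∈ s) (hP : ∀ x ∈ s, P x ↔ x = a) : #{x ∈ s | P x} = 1 := by
  rw [filter_congr hP, filter_eq', if_pos ha, card_singleton]

variable {n : ℕ} {w g : Perm ℤ} {pr pr₀ : ℤ × ℤ}

theorem t_mul_self : t * t = 1 := swap_mul_self 1 (-1)

theorem s_mul_self {i : ℤ} (hi : 1 ≤ i) : s i * s i = 1 := by
  ext x
  simp only [Perm.mul_apply, Perm.one_apply, s_apply hi]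
  split_ifs <;> omega

theorem inverts_t_iff (hpr : pr ∈ rootPairs n) : t pr.2 < t pr.1 ↔ pr = (-1, 1) := by
  rw [mem_rootPairs] at hpr
  rw [Prod.ext_iff]
  simp only [t_apply]
  split_ifs <;> omega

theorem inverts_s_iff {i : ℤ} (hi : 1 ≤ i) (hpr : pr ∈ rootPairs n) :
    s i pr.2 < s i pr.1 ↔ pr = (i, i + 1) := by
  rw [mem_rootPairs] at hpr
  rw [Prod.ext_iff]
  simp only [s_apply hi]
  split_ifs <;> omega

theorem pairMap_t : pairMap t (-1, 1) = (-1, 1) := by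
  simp only [pairMap, pairRep, t_apply]
  norm_num

theorem pairMap_s {i : ℤ} (hi : 1 ≤ i) : pairMap (s i) (i, i + 1) = (i, i + 1) := by
  simp only [pairMap, pairRep, s_apply hi]
  split_ifs <;> simp only [Prod.mk.injEq] <;> omega

theorem ninv_one (n : ℕ) : ninv n 1 = 0 := by
  rw [ninv, card_eq_zero, filter_eq_empty_iff]
  intro pr hpr
  rw [mem_rootPairs] at hpr
  simp only [Perm.one_apply]
  omega

theorem ninv_eq_one_of_inverts_iff (hpr₀ : pr₀ ∈ rootPairs n)
    (hg : ∀ pr ∈ rootPairs n, g pr.2 < g pr.1 ↔ pr = pr₀) : ninv n g = 1 :=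
  card_filter_eq_one_of_iff hpr₀ hg

theorem ninv_of_mem_gens (hn : 1 ≤ n) (hg : g ∈ gens n) : ninv n g = 1 := by
  rcases hg with rfl | ⟨i, hi1, hi2, rfl⟩
  · exact ninv_eq_one_of_inverts_iff (mem_rootPairs.2 (by omega)) fun _ => inverts_t_iff
  · exact ninv_eq_one_of_inverts_iff (pr₀ := ((i : ℤ), i + 1)) (mem_rootPairs.2 (by omega))
      fun _ => inverts_s_iff (by omega)

theorem ninv_list_prod_le (hn : 1 ≤ n) {l : List (Perm ℤ)} (hl : ∀ g ∈ l, g ∈ gens n) :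
    ninv n l.prod ≤ l.length := by
  induction l with
  | nil => simp [ninv_one]
  | cons g l ih =>
    rw [List.forall_mem_cons] at hl
    have := ninv_mul_le (gens_subset_W hn hl.1) (list_prod_mem_W hn hl.2)
    rw [List.prod_cons, List.length_cons, ← ninv_of_mem_gens hn hl.1]
    have := ih hl.2
    omega

theorem ninv_mul_add_one (hw : w ∈ W n) (hg : g ∈ W n) (hpr₀ : pr₀ ∈ rootPairs n)
    (hg₀ : ∀ pr ∈ rootPairs n, g pr.2 < g pr.1 ↔ pr = pr₀) (hfix : pairMap g pr₀ = pr₀)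
    (hw₀ : w pr₀.2 < w pr₀.1) : ninv n (w * g) + 1 = ninv n w := by
  have hcommon := card_filter_eq_one_of_iff hpr₀ fun pr hpr =>
    show g pr.2 < g pr.1 ∧ w (pairMap g pr).2 < w (pairMap g pr).1 ↔ pr = pr₀ from
      ⟨fun h => (hg₀ pr hpr).1 h.1, by
        rintro rfl
        rw [hfix]
        exact ⟨(hg₀ _ hpr₀).2 rfl, hw₀⟩⟩
  have := ninv_mul_add_two_mul hw hg
  rw [hcommon, ninv_eq_one_of_inverts_iff hpr₀ hg₀] at this
  omega

theorem eq_one_of_apply_le_apply_add_one (hw : w ∈ W n)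
    (hmono : ∀ i : ℤ, 1 ≤ i → i + 1 ≤ n → w i ≤ w (i + 1)) (h1 : 0 ≤ w 1) : w = 1 := by
  have hgap : MonotoneOn (fun i => w i - i) (Set.Icc 1 n) := by
    refine monotoneOn_of_le_succ Set.ordConnected_Icc fun i _ hi hi' => ?_
    rw [Order.succ_eq_add_one] at hi' ⊢
    have := hmono i hi.1 hi'.2
    have := w.injective.ne (show i ≠ i + 1 by omega)
    omega
  have hpos : ∀ x, 0 < x → w x = x := by
    -- `w i - i` is monotone on `[1, n]`, nonnegative at `1` and nonpositive at `n`
    intro x hx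
    by_cases hxn : x ≤ n
    · have hlow := hgap ⟨le_rfl, by omega⟩ ⟨hx, hxn⟩ hx
      have hup := hgap ⟨hx, hxn⟩ ⟨by omega, le_rfl⟩ hxn
      have := (apply_mem_Icc_of_mem_W hw (x := n) ⟨by omega, le_rfl⟩).2
      have := apply_ne_zero_of_mem_W hw (x := 1) one_ne_zero
      simp only at hlow hup
      omega
    · exact hw.2 x (by rw [abs_of_pos hx]; omega)
  ext x
  rcases lt_trichotomy x 0 with hx | rfl | hx
  · rw [Perm.one_apply, ← neg_neg x, hw.1, hpos (-x) (by omega)]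
  · have := hw.1 0
    rw [neg_zero] at this
    rw [Perm.one_apply]
    omega
  · exact hpos x hx

theorem exists_gens_ninv_mul_add_one (hn : 1 ≤ n) (hw : w ∈ W n) (hne : w ≠ 1) :
    ∃ g ∈ gens n, g * g = 1 ∧ ninv n (w * g) + 1 = ninv n w := by
  by_cases hdesc : ∃ i : ℤ, 1 ≤ i ∧ i + 1 ≤ n ∧ w (i + 1) < w i
  · obtain ⟨i, hi1, hi2, hwi⟩ := hdesc
    refine ⟨s i, Or.inr ⟨i.toNat, by omega, by omega, by rw [Int.toNat_of_nonneg (by omega)]⟩,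
      s_mul_self hi1, ninv_mul_add_one hw (s_mem_W hi1 hi2) (mem_rootPairs.2 (by omega))
        (fun _ => inverts_s_iff hi1) (pairMap_s hi1) hwi⟩
  by_cases ht : w 1 < 0
  · refine ⟨t, Or.inl rfl, t_mul_self, ninv_mul_add_one hw (t_mem_W hn)
      (mem_rootPairs.2 (by omega)) (fun _ => inverts_t_iff) pairMap_t ?_⟩
    show w 1 < w (-1)
    rw [hw.1]
    omega
  push Not at hdesc ht
  exact absurd (eq_one_of_apply_le_apply_add_one hw hdesc ht) hne

theorem exists_word_length_eq_ninv (hn : 1 ≤ n) (hw : w ∈ W n) :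
    ∃ l : List (Perm ℤ), l.length = ninv n w ∧ (∀ g ∈ l, g ∈ gens n) ∧ l.prod = w := by
  induction hk : ninv n w generalizing w with
  | zero =>
    refine ⟨[], rfl, by simp, ?_⟩
    by_contra hne
    obtain ⟨g, -, -, h⟩ := exists_gens_ninv_mul_add_one hn hw (Ne.symm hne)
    omega
  | succ k ih =>
    have hne : w ≠ 1 := by rintro rfl; rw [ninv_one] at hk; omega
    obtain ⟨g, hg, hgg, hlen⟩ := exists_gens_ninv_mul_add_one hn hw hne
    obtain ⟨l, hl, hlg, hlw⟩ := ih (mul_mem_W hw (gens_subset_W hn hg)) (by omega)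
    refine ⟨l ++ [g], by simp [hl], List.forall_mem_append.2 ⟨hlg, List.forall_mem_singleton.2 hg⟩,
      by rw [List.prod_append, hlw, List.prod_singleton, mul_assoc, hgg, mul_one]⟩

theorem len_eq_ninv (hn : 1 ≤ n) (hw : w ∈ W n) : len n w = ninv n w := by
  obtain ⟨l, hl⟩ := exists_word_length_eq_ninv hn hw
  refine le_antisymm (Nat.sInf_le ⟨l, hl⟩) ?_
  obtain ⟨l', hlen, hgens, hprod⟩ : len n w ∈ {k | ∃ l : List (Perm ℤ),
      l.length = k ∧ (∀ g ∈ l, g ∈ gens n) ∧ l.prod = w} := Nat.sInf_mem ⟨_, l, hl⟩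
  rw [← hlen, ← hprod]
  exact ninv_list_prod_le hn hgens

end Length

section Formulas

variable {n q : ℕ}

theorem desc_eq_prod_map (i j : ℕ) :
    desc i j = ((List.range (j + 1 - i)).map fun k : ℕ => s ((j : ℤ) - k)).prod := by
  simp [desc, ← List.map_eq_flatMap, Function.comp_def]

theorem desc_eq_desc_mul {i j : ℕ} (h : i ≤ j) : desc i j = desc (i + 1) j * s i := by
  rw [desc_eq_prod_map, desc_eq_prod_map, show j + 1 - i = j + 1 - (i + 1) + 1 by omega,
    List.prod_range_succ, show (j : ℤ) - ((j + 1 - (i + 1) : ℕ) : ℤ) = i by omega]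

theorem desc_apply {i j : ℕ} (hi : 1 ≤ i) (hij : i ≤ j + 1) (x : ℤ) :
    desc i j x = if x = i then (j : ℤ) + 1 else if i < x ∧ x ≤ (j : ℤ) + 1 then x - 1
      else if x = -i then -((j : ℤ) + 1) else if -((j : ℤ) + 1) ≤ x ∧ x < -i then x + 1
      else x := by
  induction hd : j + 1 - i generalizing i x with
  | zero =>
    rw [desc_eq_prod_map, hd, List.range_zero, List.map_nil, List.prod_nil, Perm.one_apply]
    split_ifs <;> omega
  | succ d ih =>
    rw [desc_eq_desc_mul (by omega), Perm.mul_apply,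
      ih (i := i + 1) (by omega) (by omega) _ (by omega),
      s_apply (by exact_mod_cast hi)]
    push_cast
    split_ifs <;> omega

theorem prod_desc_apply (r k : ℕ) (x : ℤ) :
    ((List.range k).map fun m => desc (1 + m) (r + m)).prod x =
      if 1 ≤ x ∧ x ≤ k then x + r else if k < x ∧ x ≤ k + r then x - k
      else if -k ≤ x ∧ x ≤ -1 then x - r else if -(k + r) ≤ x ∧ x < -k then x + k else x := by
  induction k generalizing x with
  | zero =>
    rw [List.range_zero, List.map_nil, List.prod_nil, Perm.one_apply]
    split_ifs <;> omega
  | succ k ih =>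
    rw [List.prod_range_succ, Perm.mul_apply, desc_apply (by omega) (by omega), ih]
    push_cast
    split_ifs <;> omega

theorem prod_desc_block_apply (q m : ℕ) (x : ℤ) :
    ((List.range m).map fun k => desc (q + 1) (q + 1 + k)).prod x =
      if q + 1 ≤ x ∧ x ≤ q + 1 + m then 2 * q + 2 + m - x
      else if -(q + 1 + m : ℤ) ≤ x ∧ x ≤ -(q + 1) then -(2 * q + 2 + m) - x else x := by
  induction m generalizing x with
  | zero =>
    rw [List.range_zero, List.map_nil, List.prod_nil, Perm.one_apply]
    split_ifs <;> omega
  | succ m ih =>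
    rw [List.prod_range_succ, Perm.mul_apply, desc_apply (by omega) (by omega), ih]
    push_cast
    split_ifs <;> omega

theorem aw_apply (q : ℕ) (x : ℤ) :
    aw q x = if 1 ≤ x ∧ x ≤ q then x - (q + 1)
      else if -(q : ℤ) ≤ x ∧ x ≤ -1 then x + (q + 1) else x := by
  induction q generalizing x with
  | zero =>
    rw [aw, List.range_zero, List.map_nil, List.prod_nil, Perm.one_apply]
    split_ifs <;> omega
  | succ q ih =>
    rw [aw, List.prod_range_succ, Perm.mul_apply, ← aw, ih, Perm.mul_apply,
      desc_apply (j := q) le_rfl (by omega), t_apply]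
    push_cast
    split_ifs <;> first | contradiction | omega

theorem p_apply (hq : q ≤ n) (x : ℤ) :
    p n q x = if 1 ≤ x ∧ x ≤ q then x + n - q
      else if q < x ∧ x ≤ n then x - q
      else if -(q : ℤ) ≤ x ∧ x ≤ -1 then x - n + q
      else if -(n : ℤ) ≤ x ∧ x < -q then x + q else x := by
  rw [p, prod_desc_apply]
  split_ifs <;> omega

theorem sig_apply (hq : q ≤ n) (x : ℤ) :
    sig n q x = if 1 ≤ x ∧ x ≤ q then x - (q + 1)
      else if q < x ∧ x ≤ n then n + q + 1 - x
      else if -(q : ℤ) ≤ x ∧ x ≤ -1 then x + (q + 1)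
      else if -(n : ℤ) ≤ x ∧ x < -q then -(n + q + 1 : ℤ) - x else x := by
  rw [sig, Perm.mul_apply, bw, prod_desc_block_apply, aw_apply]
  split_ifs <;> omega

theorem p_mem_W (hq : q ≤ n) : p n q ∈ W n :=
  mem_W_of_odd (fun x => by simp only [p_apply hq]; split_ifs <;> omega)
    fun x hx => by rw [p_apply hq]; split_ifs <;> omega

theorem sig_mem_W (hq : q ≤ n) : sig n q ∈ W n :=
  mem_W_of_odd (fun x => by simp only [sig_apply hq]; split_ifs <;> omega)
    fun x hx => by rw [sig_apply hq]; split_ifs <;> omega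

end Formulas

section Main

variable {n q : ℕ} {pr : ℤ × ℤ}

/-- The pairs inverted by `p_{n,q}`. -/
def IsCrossing (q : ℕ) (pr : ℤ × ℤ) : Prop := 1 ≤ pr.1 ∧ pr.1 ≤ q ∧ (q : ℤ) < pr.2

theorem inverts_of_suf (hn : 1 ≤ n) {y w : Perm ℤ} (hw : w ∈ W n) (hy : Suf n y w)
    (hpr : pr ∈ rootPairs n) (h : y pr.2 < y pr.1) : w pr.2 < w pr.1 := by
  have hyW := mem_W_of_suf hy hw
  obtain ⟨z, hz, rfl, hlen⟩ := hy
  rw [len_eq_ninv hn hw, len_eq_ninv hn hz, len_eq_ninv hn hyW] at hlen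
  exact inverts_of_ninv_mul_eq_add hz hyW hlen hpr h

theorem isCrossing_of_p_inverts (hq : q ≤ n) (hpr : pr ∈ rootPairs n)
    (h : p n q pr.2 < p n q pr.1) : IsCrossing q pr := by
  rw [mem_rootPairs] at hpr
  have ha := p_apply hq pr.1
  have hb := p_apply hq pr.2
  unfold IsCrossing
  split_ifs at ha hb <;> omega

theorem isCrossing_of_suf_p (hn : 1 ≤ n) (hq : q ≤ n) {π : Perm ℤ} (hπ : Suf n π (p n q)) :
    ∀ pr ∈ rootPairs n, π pr.2 < π pr.1 → IsCrossing q pr := fun _ hpr h =>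
  isCrossing_of_p_inverts hq hpr (inverts_of_suf hn (p_mem_W hq) hπ hpr h)

theorem not_isCrossing_pairMap_sig (hq : q ≤ n) (hpr : pr ∈ rootPairs n)
    (h : sig n q pr.2 < sig n q pr.1) : ¬IsCrossing q (pairMap (sig n q) pr) := by
  rw [mem_rootPairs] at hpr
  have ha := sig_apply hq pr.1
  have hb := sig_apply hq pr.2
  unfold IsCrossing pairMap pairRep
  split_ifs at ha hb <;> split_ifs <;> dsimp only <;> omega

theorem sig_not_inverts_of_isCrossing (hq : q ≤ n) (hpr : pr ∈ rootPairs n)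
    (hc : IsCrossing q pr) :
    ¬sig n q pr.2 < sig n q pr.1 ∧ ¬IsCrossing q (pairMap (sig n q) pr) := by
  rw [mem_rootPairs] at hpr
  have ha := sig_apply hq pr.1
  have hb := sig_apply hq pr.2
  unfold IsCrossing pairMap pairRep at *
  split_ifs at ha hb <;> constructor <;> (try split_ifs) <;> (try dsimp only) <;> omega

variable {π : Perm ℤ}

theorem ninv_mul_sig (hq : q ≤ n) (hπW : π ∈ W n)
    (hπ : ∀ pr ∈ rootPairs n, π pr.2 < π pr.1 → IsCrossing q pr) :
    ninv n (π * sig n q) = ninv n π + ninv n (sig n q) :=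
  (ninv_mul_eq_add_iff hπW (sig_mem_W hq)).2 fun _ hpr hσ hπσ =>
    not_isCrossing_pairMap_sig hq hpr hσ (hπ _ (pairMap_mem (sig_mem_W hq) hpr) hπσ)

theorem mul_sig_not_inverts_of_isCrossing (hq : q ≤ n) (hπW : π ∈ W n)
    (hπ : ∀ pr ∈ rootPairs n, π pr.2 < π pr.1 → IsCrossing q pr) (hpr : pr ∈ rootPairs n)
    (hc : IsCrossing q pr) : ¬(π * sig n q) pr.2 < (π * sig n q) pr.1 := by
  obtain ⟨hσ, hσc⟩ := sig_not_inverts_of_isCrossing hq hpr hc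
  have hπσ := mt (hπ _ (pairMap_mem (sig_mem_W hq) hpr)) hσc
  rw [mul_inverts_iff hπW hpr]
  tauto

end Main

theorem statement3 (n : ℕ) (hn : 2 ≤ n) (q : ℕ) (hq : q ≤ n) (π τ : Equiv.Perm ℤ)
    (hπ : Suf n π (p n q)) (hτ : Suf n τ (p n q)) :
    len n (π * sig n q * τ⁻¹) = len n π + len n (sig n q) + len n τ := by
  have hn1 : 1 ≤ n := by omega
  have hσW := sig_mem_W hq
  have hπW := mem_W_of_suf hπ (p_mem_W hq)
  have hτW := mem_W_of_suf hτ (p_mem_W hq)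
  have hτW' := inv_mem_W hτW
  have hπc := isCrossing_of_suf_p hn1 hq hπ
  have hτc := isCrossing_of_suf_p hn1 hq hτ
  have hπσ := ninv_mul_sig hq hπW hπc
  have hπστ : ninv n (π * sig n q * τ⁻¹) = ninv n (π * sig n q) + ninv n τ⁻¹ :=
    (ninv_mul_eq_add_iff (mul_mem_W hπW hσW) hτW').2 fun _ hpr hτpr =>
      mul_sig_not_inverts_of_isCrossing hq hπW hπc (pairMap_mem hτW' hpr)
        (hτc _ (pairMap_mem hτW' hpr) ((inv_inverts_iff hτW hpr).1 hτpr))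
  rw [len_eq_ninv hn1 (mul_mem_W (mul_mem_W hπW hσW) hτW'), len_eq_ninv hn1 hπW,
    len_eq_ninv hn1 hσW, len_eq_ninv hn1 hτW, hπστ, hπσ, ninv_inv hτW]

end BnPaper
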